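/- arXiv:1703.07596 — 2 statements merged into one kernel-verified Lean document; each statement's English description precedes it below -/
import Mathlib

section
/- Let P and E be probability measures on ℝ^d with φ_E(ω) a strictly positive real number for every ω ∈ ℝ^d. Then for every ω ∈ ℝ^d with φ_P(ω) ≠ 0, one has φ_{P⋆E}(ω) ≠ 0 and the phase functions coincide: φ_{P⋆E}(ω)/|φ_{P⋆E}(ω)| = φ_P(ω)/|φ_P(ω)|, where P⋆E denotes the convolution of P and E. -/
open MeasureTheory RealInnerProductSpace

/-- The characteristic function of a measure `P` on `ℝ^d`. -/
noncomputable def charFunEuc {d : ℕ} (P : Measure (EuclideanSpace ℝ (Fin d)))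
    (ω : EuclideanSpace ℝ (Fin d)) : ℂ :=
  ∫ x, Complex.exp (Complex.I * (⟪ω, x⟫ : ℝ)) ∂P

/-- The phase function of a measure `P` on `ℝ^d`. -/
noncomputable def phase {d : ℕ} (P : Measure (EuclideanSpace ℝ (Fin d)))
    (ω : EuclideanSpace ℝ (Fin d)) : ℂ :=
  charFunEuc P ω / ((‖charFunEuc P ω‖ : ℝ) : ℂ)

lemma charFunEuc_conv {d : ℕ} (P E : Measure (EuclideanSpace ℝ (Fin d)))
    [IsProbabilityMeasure P] [IsProbabilityMeasure E] (ω : EuclideanSpace ℝ (Fin d)) :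
    charFunEuc (P.conv E) ω = charFunEuc P ω * charFunEuc E ω := by
  have hf : Continuous fun x : EuclideanSpace ℝ (Fin d) =>
      Complex.exp (Complex.I * (⟪ω, x⟫ : ℝ)) := by
    exact Complex.continuous_exp.comp (continuous_const.mul
      (Complex.continuous_ofReal.comp (continuous_const.inner continuous_id)))
  rw [charFunEuc, Measure.conv, integral_map (by fun_prop) hf.aestronglyMeasurable]
  have : ∀ p : EuclideanSpace ℝ (Fin d) × EuclideanSpace ℝ (Fin d),
      Complex.exp (Complex.I * (⟪ω, p.1 + p.2⟫ : ℝ)) =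
      Complex.exp (Complex.I * (⟪ω, p.1⟫ : ℝ)) * Complex.exp (Complex.I * (⟪ω, p.2⟫ : ℝ)) := by
    intro p
    rw [← Complex.exp_add, inner_add_right]
    push_cast
    ring_nf
  simp only [this]
  exact integral_prod_mul (fun x => Complex.exp (Complex.I * (⟪ω, x⟫ : ℝ)))
    (fun x => Complex.exp (Complex.I * (⟪ω, x⟫ : ℝ)))

/-- If `E` is an SPD component (its characteristic function is a strictly positive real
number everywhere), then wherever `φ_P` does not vanish, `φ_{P⋆E}` does not vanish and the
phase functions of `P⋆E` and `P` coincide. -/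
theorem stmt_1 {d : ℕ} (P E : Measure (EuclideanSpace ℝ (Fin d)))
    [IsProbabilityMeasure P] [IsProbabilityMeasure E]
    (hE : ∀ ω : EuclideanSpace ℝ (Fin d), ∃ r : ℝ, 0 < r ∧ charFunEuc E ω = (r : ℂ)) :
    ∀ ω : EuclideanSpace ℝ (Fin d), charFunEuc P ω ≠ 0 →
      charFunEuc (P.conv E) ω ≠ 0 ∧ phase (P.conv E) ω = phase P ω := by
  intro ω hP
  obtain ⟨r, hr, hEr⟩ := hE ω
  have hc : charFunEuc (P.conv E) ω = charFunEuc P ω * r := by rw [charFunEuc_conv, hEr]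
  have hrne : (r : ℂ) ≠ 0 := by exact_mod_cast hr.ne'
  refine ⟨by rw [hc]; exact mul_ne_zero hP hrne, ?_⟩
  rw [phase, phase, hc, norm_mul]
  have habs : ‖(r : ℂ)‖ = r := by
    rw [Complex.norm_real, Real.norm_of_nonneg hr.le]
  rw [habs]
  push_cast
  rw [mul_div_mul_right _ _ hrne]
end

section
/- Let P be the probability measure on ℝ with density (1/√(2π)) x² exp(−x²/2) and Q the probability measure on ℝ with density (1/2) |x| exp(−|x|). Then P ≠ Q, yet for every ω ∈ ℝ with |ω| ≠ 1 one has φ_P(ω) ≠ 0, φ_Q(ω) ≠ 0, and the phase functions coincide: φ_P(ω)/|φ_P(ω)| = φ_Q(ω)/|φ_Q(ω)| (both equal +1 for |ω| < 1 and −1 for |ω| > 1). -/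
open MeasureTheory Real

/-- The characteristic function of a measure `P` on `ℝ`. -/
noncomputable def charFun1 (P : Measure ℝ) (ω : ℝ) : ℂ :=
  ∫ x, Complex.exp (Complex.I * ((ω * x : ℝ) : ℂ)) ∂P

/-- The phase function of a measure `P` on `ℝ`. -/
noncomputable def phase1 (P : Measure ℝ) (ω : ℝ) : ℂ :=
  charFun1 P ω / ((‖charFun1 P ω‖ : ℝ) : ℂ)


section Aux
open MeasureTheory Real Complex Set Filter Topology FourierTransform

lemma L1 {a : ℂ} (ha : 0 < a.re) :
    ∫ x in Ioi (0:ℝ), (x:ℂ) * Complex.exp (-a * x) = 1 / a ^ 2 := by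
  have ha0 : a ≠ 0 := fun h => by simp [h] at ha
  set F : ℝ → ℂ := fun x => -((x:ℂ)/a + 1/a^2) * Complex.exp (-a * x) with hF
  have hderiv : ∀ x : ℝ, HasDerivAt F ((x:ℂ) * Complex.exp (-a * x)) x := by
    intro x
    have h0 : HasDerivAt (fun x : ℝ => (x:ℂ)) 1 x := Complex.ofRealCLM.hasDerivAt
    have h1 : HasDerivAt (fun x : ℝ => -((x:ℂ)/a + 1/a^2)) (-(1/a)) x := by
      have := ((h0.div_const a).add_const (1/a^2)).neg
      exact this
    have h2 : HasDerivAt (fun x : ℝ => Complex.exp (-a * x)) (-a * Complex.exp (-a * x)) x := by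
      have : HasDerivAt (fun x : ℝ => -a * (x:ℂ)) (-a) x := by
        simpa using h0.const_mul (-a)
      simpa [mul_comm] using this.cexp
    have := h1.mul h2
    refine this.congr_deriv ?_
    field_simp
    ring
  have hcont : Continuous (fun x : ℝ => (x:ℂ) * Complex.exp (-a * x)) := by
    continuity
  have hbound : IntegrableOn (fun x : ℝ => x ^ (1:ℝ) * Real.exp (-a.re * x ^ (1:ℝ))) (Ioi 0) :=
    integrableOn_rpow_mul_exp_neg_mul_rpow (by norm_num) (by norm_num) ha
  have hnorm : ∀ x : ℝ, ‖(x:ℂ) * Complex.exp (-a * x)‖ = |x| * Real.exp (-a.re * x) := by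
    intro x
    simp only [norm_mul, Complex.norm_real, Real.norm_eq_abs, Complex.norm_exp]
    congr 1
    simp [neg_re, Complex.ofReal_re]
  have hint : IntegrableOn (fun x : ℝ => (x:ℂ) * Complex.exp (-a * x)) (Ioi 0) := by
    refine Integrable.mono' hbound (hcont.aestronglyMeasurable.restrict) ?_
    filter_upwards [ae_restrict_mem measurableSet_Ioi] with x hx
    rw [hnorm x, Real.rpow_one, _root_.abs_of_pos hx]
  have hlim : Tendsto F atTop (𝓝 0) := by
    set c1 : ℝ := ‖1/a‖ with hc1
    set c2 : ℝ := ‖1/a^2‖ with hc2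
    have hz : Tendsto (fun x : ℝ => c1 * (x ^ (1:ℝ) * Real.exp (-a.re * x))
        + c2 * Real.exp (-a.re * x)) atTop (𝓝 0) := by
      have h1 := (tendsto_rpow_mul_exp_neg_mul_atTop_nhds_zero 1 a.re ha).const_mul c1
      have hmt : Tendsto (fun x : ℝ => a.re * x) atTop atTop :=
        Tendsto.const_mul_atTop ha tendsto_id
      have h2 : Tendsto (fun x : ℝ => Real.exp (-a.re * x)) atTop (𝓝 0) := by
        have := Real.tendsto_exp_neg_atTop_nhds_zero.comp hmt
        simpa [Function.comp_def, neg_mul] using this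
      have h3 := h1.add (h2.const_mul c2)
      simpa using h3
    refine squeeze_zero_norm' ?_ hz
    filter_upwards [eventually_gt_atTop (0:ℝ)] with x hx
    have hFx : ‖F x‖ = ‖(x:ℂ)/a + 1/a^2‖ * Real.exp (-a.re * x) := by
      simp only [hF, norm_mul, norm_neg, Complex.norm_exp]
      congr 2
      simp [neg_re, Complex.ofReal_re]
    rw [hFx, Real.rpow_one]
    have hxa : ‖(x:ℂ)/a‖ = x * c1 := by
      rw [hc1, norm_div, norm_div, norm_one]
      simp only [Complex.norm_real, Real.norm_eq_abs, _root_.abs_of_pos hx]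
      ring
    have hle : ‖(x:ℂ)/a + 1/a^2‖ ≤ x * c1 + c2 := by
      refine (norm_add_le _ _).trans ?_
      rw [hxa]
    calc ‖(x:ℂ)/a + 1/a^2‖ * Real.exp (-a.re * x)
        ≤ (x * c1 + c2) * Real.exp (-a.re * x) := by
          exact mul_le_mul_of_nonneg_right hle (Real.exp_pos _).le
      _ = c1 * (x * Real.exp (-a.re * x)) + c2 * Real.exp (-a.re * x) := by ring
  have key := integral_Ioi_of_hasDerivAt_of_tendsto
    ((hderiv 0).continuousAt.continuousWithinAt) (fun x _ => hderiv x) hint hlim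
  rw [key]
  simp [hF]


lemma L1int {a : ℂ} (ha : 0 < a.re) :
    IntegrableOn (fun x : ℝ => (x:ℂ) * Complex.exp (-a * x)) (Ioi 0) := by
  have hcont : Continuous (fun x : ℝ => (x:ℂ) * Complex.exp (-a * x)) := by continuity
  have hbound : IntegrableOn (fun x : ℝ => x ^ (1:ℝ) * Real.exp (-a.re * x ^ (1:ℝ))) (Ioi 0) :=
    integrableOn_rpow_mul_exp_neg_mul_rpow (by norm_num) (by norm_num) ha
  refine Integrable.mono' hbound (hcont.aestronglyMeasurable.restrict) ?_
  filter_upwards [ae_restrict_mem measurableSet_Ioi] with x hx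
  simp only [norm_mul, Complex.norm_real, Real.norm_eq_abs, Complex.norm_exp,
    Real.rpow_one]
  rw [_root_.abs_of_pos hx]
  have : (-a * (x:ℂ)).re = -a.re * x := by simp [Complex.mul_re]
  rw [this]

lemma integrableOn_Iic_of_neg {f : ℝ → ℂ} (h : IntegrableOn (fun x => f (-x)) (Ici (0:ℝ))) :
    IntegrableOn f (Iic (0:ℝ)) := by
  have h_map_neg : (volume.restrict (Ici (0:ℝ))).map Neg.neg = volume.restrict (Iic (0:ℝ)) := by
    conv => rhs; rw [← Measure.map_neg_eq_self (volume : Measure ℝ),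
      measurableEmbedding_neg.restrict_map]
    simp
  rw [IntegrableOn, ← h_map_neg, measurableEmbedding_neg.integrable_map_iff]
  exact h

lemma LQ (ω : ℝ) :
    ∫ x : ℝ, ((1/2) * |x| * Real.exp (-|x|) : ℝ) • Complex.exp (Complex.I * ((ω * x : ℝ) : ℂ))
      = (((1 - ω^2)/(1+ω^2)^2 : ℝ) : ℂ) := by
  set g : ℝ → ℂ := fun x =>
    ((1/2) * |x| * Real.exp (-|x|) : ℝ) • Complex.exp (Complex.I * ((ω * x : ℝ) : ℂ)) with hg
  set a₁ : ℂ := 1 - Complex.I * ω with ha₁def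
  set a₂ : ℂ := 1 + Complex.I * ω with ha₂def
  have ha₁ : 0 < a₁.re := by simp [ha₁def]
  have ha₂ : 0 < a₂.re := by simp [ha₂def]
  have heq1 : EqOn (fun x : ℝ => (1/2 : ℂ) * ((x:ℂ) * Complex.exp (-a₁ * x))) g (Ioi 0) := by
    intro x hx
    have hx0 : (0:ℝ) < x := hx
    simp only [hg, Complex.real_smul]
    rw [_root_.abs_of_pos hx0,
      show -a₁ * (x:ℂ) = ((-x : ℝ) : ℂ) + Complex.I * ((ω * x : ℝ) : ℂ) by
        rw [ha₁def]; push_cast; ring,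
      Complex.exp_add, ← Complex.ofReal_exp]
    push_cast
    ring
  have heq2 : EqOn (fun x : ℝ => (1/2 : ℂ) * ((x:ℂ) * Complex.exp (-a₂ * x)))
      (fun x => g (-x)) (Ioi 0) := by
    intro x hx
    have hx0 : (0:ℝ) < x := hx
    simp only [hg, Complex.real_smul, abs_neg]
    rw [_root_.abs_of_pos hx0,
      show ((ω * -x : ℝ) : ℂ) = -(((ω * x : ℝ)) : ℂ) by push_cast; ring,
      show -a₂ * (x:ℂ) = ((-x : ℝ) : ℂ) + Complex.I * -((ω * x : ℝ) : ℂ) by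
        rw [ha₂def]; push_cast; ring,
      Complex.exp_add, ← Complex.ofReal_exp]
    push_cast
    ring
  have hIoi_int : IntegrableOn g (Ioi 0) :=
    IntegrableOn.congr_fun ((L1int ha₁).const_mul (1/2 : ℂ)) heq1 measurableSet_Ioi
  have hneg_int : IntegrableOn (fun x => g (-x)) (Ici (0:ℝ)) := by
    rw [integrableOn_Ici_iff_integrableOn_Ioi]
    exact IntegrableOn.congr_fun ((L1int ha₂).const_mul (1/2 : ℂ)) heq2 measurableSet_Ioi
  have hIic_int : IntegrableOn g (Iic 0) := integrableOn_Iic_of_neg hneg_int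
  have hval1 : ∫ x in Ioi (0:ℝ), g x = (1/2 : ℂ) * (1/a₁^2) := by
    rw [← setIntegral_congr_fun measurableSet_Ioi heq1, integral_const_mul, L1 ha₁]
  have hval2 : ∫ x in Iic (0:ℝ), g x = (1/2 : ℂ) * (1/a₂^2) := by
    have := integral_comp_neg_Ioi (0:ℝ) g
    rw [neg_zero] at this
    rw [← this, ← setIntegral_congr_fun measurableSet_Ioi heq2, integral_const_mul, L1 ha₂]
  rw [← intervalIntegral.integral_Iic_add_Ioi hIic_int hIoi_int, hval1, hval2]
  have ha₁0 : a₁ ≠ 0 := by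
    intro h; rw [h] at ha₁; simp at ha₁
  have ha₂0 : a₂ ≠ 0 := by
    intro h; rw [h] at ha₂; simp at ha₂
  have h12 : a₁ * a₂ = ((1 + ω^2 : ℝ) : ℂ) := by
    rw [ha₁def, ha₂def]; push_cast
    ring_nf
    rw [Complex.I_sq]; ring
  have hsum : a₁^2 + a₂^2 = ((2 - 2*ω^2 : ℝ) : ℂ) := by
    rw [ha₁def, ha₂def]; push_cast
    ring_nf
    rw [Complex.I_sq]; ring
  have hne : ((1 + ω^2 : ℝ) : ℂ) ≠ 0 := by
    rw [Complex.ofReal_ne_zero]; positivity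
  calc (1/2 : ℂ) * (1/a₂^2) + (1/2 : ℂ) * (1/a₁^2)
      = (a₁^2 + a₂^2) / (2*(a₁*a₂)^2) := by field_simp
    _ = ((2 - 2*ω^2 : ℝ):ℂ) / (2*((1 + ω^2 : ℝ):ℂ)^2) := by rw [hsum, h12]
    _ = (((1 - ω^2)/(1+ω^2)^2 : ℝ) : ℂ) := by
        rw [show (((1 - ω^2)/(1+ω^2)^2 : ℝ) : ℂ)
            = ((1-ω^2:ℝ):ℂ)/(((1+ω^2:ℝ):ℂ))^2 by push_cast; ring]
        rw [div_eq_div_iff (mul_ne_zero two_ne_zero (pow_ne_zero 2 hne)) (pow_ne_zero 2 hne)]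
        push_cast; ring


lemma LP (ω : ℝ) :
    ∫ x : ℝ, ((Real.sqrt (2*π))⁻¹ * x^2 * Real.exp (-x^2/2) : ℝ) •
        Complex.exp (Complex.I * ((ω * x : ℝ) : ℂ))
      = (((1 - ω^2) * Real.exp (-ω^2/2) : ℝ) : ℂ) := by
  have hπ : (0:ℝ) < π := pi_pos
  set b : ℂ := (((2*π)⁻¹ : ℝ) : ℂ) with hbdef
  have hb : 0 < b.re := by
    rw [hbdef]; simp only [Complex.ofReal_re]; positivity
  set f : ℝ → ℂ := fun x => Complex.exp (((-x^2/2 : ℝ) : ℂ)) with hfdef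
  -- identification with the gaussian of fourierIntegral_gaussian_pi
  have hfeq : (fun x : ℝ => Complex.exp (-(π:ℂ) * b * (x:ℂ)^2)) = f := by
    funext x
    rw [hfdef]
    congr 1
    rw [hbdef]
    have hπ0 : (π:ℂ) ≠ 0 := by exact_mod_cast hπ.ne'
    push_cast
    field_simp
  -- integrability of x^n • f
  have hint : ∀ n : ℕ, n ≤ (2:ℕ∞) → Integrable (fun x : ℝ => x^n • f x) := by
    intro n hn
    have hn2 : n ≤ 2 := by exact_mod_cast hn
    have hbound : Integrable (fun x : ℝ =>
        Real.exp (-(1/2) * x^2) + 4 * Real.exp (-(1/4) * x^2)) :=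
      (integrable_exp_neg_mul_sq (by norm_num : (0:ℝ) < 1/2)).add
        ((integrable_exp_neg_mul_sq (by norm_num : (0:ℝ) < 1/4)).const_mul 4)
    have hcont : Continuous fun x : ℝ => x^n • f x := by
      rw [hfdef]; continuity
    refine hbound.mono' hcont.aestronglyMeasurable ?_
    filter_upwards with x
    have hfx : ‖f x‖ = Real.exp (-x^2/2) := by
      simp only [hfdef]
      rw [← Complex.ofReal_exp, Complex.norm_real, Real.norm_eq_abs,
        _root_.abs_of_pos (Real.exp_pos _)]
    rw [norm_smul, hfx, Real.norm_eq_abs, _root_.abs_pow]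
    have h1 : |x|^n ≤ 1 + x^2 := by
      interval_cases n
      · simp; nlinarith [sq_nonneg x]
      · nlinarith [abs_nonneg x, _root_.sq_abs x, sq_nonneg (|x| - 1)]
      · rw [_root_.sq_abs]; nlinarith
    have h2 : x^2 ≤ 4 * Real.exp (x^2/4) := by
      nlinarith [Real.add_one_le_exp (x^2/4), Real.exp_pos (x^2/4)]
    calc |x|^n * Real.exp (-x^2/2) ≤ (1 + x^2) * Real.exp (-x^2/2) := by
          gcongr
      _ = Real.exp (-x^2/2) + x^2 * Real.exp (-x^2/2) := by ring
      _ ≤ Real.exp (-(1/2)*x^2) + 4 * Real.exp (-(1/4)*x^2) := by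
          have : x^2 * Real.exp (-x^2/2) ≤ 4 * Real.exp (-(1/4)*x^2) := by
            calc x^2 * Real.exp (-x^2/2) ≤ 4 * Real.exp (x^2/4) * Real.exp (-x^2/2) := by
                  gcongr
              _ = 4 * Real.exp (-(1/4)*x^2) := by
                  rw [mul_assoc, ← Real.exp_add]; ring_nf
            
          have heq : Real.exp (-x^2/2) = Real.exp (-(1/2)*x^2) := by ring_nf
          rw [← heq]
          linarith
  -- the Fourier transform of f
  set K : ℝ := Real.sqrt (2*π) with hKdef
  have hK0 : (0:ℝ) < K := Real.sqrt_pos.mpr (by positivity)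
  set m : ℝ := -(2*π^2) with hmdef
  have hFf : 𝓕 f = fun t : ℝ => (K:ℂ) * Complex.exp ((m:ℂ) * (t:ℂ)^2) := by
    have hKb : 1/b^((1:ℂ)/2) = (K:ℂ) := by
      rw [hbdef, show ((1:ℂ)/2) = (((1/2 : ℝ)):ℂ) by push_cast; ring,
        ← Complex.ofReal_cpow (by positivity) (1/2 : ℝ),
        ← Real.sqrt_eq_rpow, Real.sqrt_inv, hKdef]
      rw [← Complex.ofReal_one, ← Complex.ofReal_div]
      norm_cast
      rw [one_div, inv_inv]
    have hmb : -(π:ℂ)/b = (m:ℂ) := by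
      rw [hbdef, hmdef]
      have hπ0 : (π:ℂ) ≠ 0 := by exact_mod_cast hπ.ne'
      push_cast
      field_simp
    rw [← hfeq, fourier_gaussian_pi hb]
    funext t
    rw [hKb, hmb]
  have hKC : (K:ℂ) ≠ 0 := by exact_mod_cast hK0.ne'
  have h0' : ∀ t : ℝ, HasDerivAt (fun t : ℝ => (t:ℂ)) 1 t :=
    fun t => Complex.ofRealCLM.hasDerivAt
  have hin : ∀ t : ℝ, HasDerivAt (fun t : ℝ => (m:ℂ)*(t:ℂ)^2) ((m:ℂ)*(2*(t:ℂ))) t := by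
    intro t
    have hsq : HasDerivAt (fun t : ℝ => (t:ℂ)^2) (2*(t:ℂ)) t := by
      have := (h0' t).mul (h0' t)
      exact (this.congr_deriv (by ring)).congr_of_eventuallyEq
        (Filter.Eventually.of_forall fun u => by simp [sq])
    exact hsq.const_mul (m:ℂ)
  have hder1 : ∀ t : ℝ, HasDerivAt (fun t : ℝ => (K:ℂ) * Complex.exp ((m:ℂ) * (t:ℂ)^2))
      ((K:ℂ) * ((m:ℂ) * (2*(t:ℂ)) * Complex.exp ((m:ℂ) * (t:ℂ)^2))) t := by
    intro t
    have := ((hin t).cexp).const_mul (K:ℂ)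
    exact this.congr_deriv (by ring)
  have hd1 : deriv (𝓕 f) =
      fun t : ℝ => (K:ℂ) * ((m:ℂ) * (2*(t:ℂ)) * Complex.exp ((m:ℂ) * (t:ℂ)^2)) := by
    rw [hFf]; funext t; exact (hder1 t).deriv
  have hder2 : ∀ t : ℝ, HasDerivAt
      (fun t : ℝ => (K:ℂ) * ((m:ℂ) * (2*(t:ℂ)) * Complex.exp ((m:ℂ) * (t:ℂ)^2)))
      ((K:ℂ) * ((m:ℂ)*2 + (m:ℂ)^2*4*(t:ℂ)^2) * Complex.exp ((m:ℂ)*(t:ℂ)^2)) t := by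
    intro t
    have hmul : HasDerivAt (fun t : ℝ => (t:ℂ) * Complex.exp ((m:ℂ) * (t:ℂ)^2))
        (1 * Complex.exp ((m:ℂ) * (t:ℂ)^2)
          + (t:ℂ) * (Complex.exp ((m:ℂ) * (t:ℂ)^2) * ((m:ℂ)*(2*(t:ℂ))))) t :=
      (h0' t).mul ((hin t).cexp)
    have := hmul.const_mul ((K:ℂ) * ((m:ℂ)*2))
    exact (this.congr_deriv (by ring)).congr_of_eventuallyEq
      (Filter.Eventually.of_forall fun u => by ring)
  have hd2 : iteratedDeriv 2 (𝓕 f) = fun t : ℝ =>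
      (K:ℂ) * ((m:ℂ)*2 + (m:ℂ)^2*4*(t:ℂ)^2) * Complex.exp ((m:ℂ)*(t:ℂ)^2) := by
    have h22 : iteratedDeriv 2 (𝓕 f) = deriv (deriv (𝓕 f)) := by
      simp [iteratedDeriv_eq_iterate]
    rw [h22, hd1]
    funext t; exact (hder2 t).deriv
  have hiter := Real.iteratedDeriv_fourier (f := f) (N := 2) (n := 2) hint le_rfl
  set t₀ : ℝ := -ω/(2*π) with ht₀def
  have heval := congrFun hiter t₀
  rw [hd2, Real.fourier_real_eq_integral_exp_smul] at heval
  simp only [] at heval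
  set S : ℂ := ∫ x : ℝ, ((x^2 * Real.exp (-x^2/2) : ℝ) : ℂ)
      * Complex.exp (Complex.I * ((ω*x : ℝ) : ℂ)) with hSdef
  have hRHS : (∫ v : ℝ, Complex.exp (((-2*π*v*t₀ : ℝ):ℂ) * Complex.I)
      • ((-2*↑π*Complex.I*↑v)^2 • f v)) = (-4*(π:ℂ)^2) * S := by
    rw [hSdef, ← integral_const_mul]
    congr 1
    funext x
    have harg : (-2*π*x*t₀ : ℝ) = ω*x := by rw [ht₀def]; field_simp
    rw [harg]
    simp only [hfdef, smul_eq_mul, ← Complex.ofReal_exp]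
    rw [show ((-2*(π:ℂ)*Complex.I*(x:ℂ))^2) = -4*(π:ℂ)^2*(x:ℂ)^2 by
      rw [show (-2*(π:ℂ)*Complex.I*(x:ℂ))^2
          = 4*(π:ℂ)^2*(x:ℂ)^2*(Complex.I^2) by ring, Complex.I_sq]; ring]
    push_cast
    ring
  rw [hRHS] at heval
  have hm2 : ((m:ℂ)*2 + (m:ℂ)^2*4*(t₀:ℂ)^2) = ((-4*π^2*(1-ω^2) : ℝ) : ℂ) := by
    rw [hmdef, ht₀def]
    have hπ0 : (π:ℂ) ≠ 0 := by exact_mod_cast hπ.ne'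
    push_cast
    field_simp
    ring
  have hexp0 : (m:ℂ)*(t₀:ℂ)^2 = ((-ω^2/2 : ℝ) : ℂ) := by
    rw [hmdef, ht₀def]
    have hπ0 : (π:ℂ) ≠ 0 := by exact_mod_cast hπ.ne'
    push_cast
    field_simp
  rw [hm2, hexp0, ← Complex.ofReal_exp] at heval
  have hπ4 : (-4*(π:ℂ)^2) ≠ 0 := by
    have hπ0 : (π:ℂ) ≠ 0 := by exact_mod_cast hπ.ne'
    simp [hπ0]
  have hS' : S = (K:ℂ) * ((1-ω^2 : ℝ):ℂ) * ((Real.exp (-ω^2/2) : ℝ):ℂ) := by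
    apply mul_left_cancel₀ hπ4
    rw [← heval]
    push_cast
    ring
  have hsplit : (fun x : ℝ => ((K⁻¹ : ℝ) * x^2 * Real.exp (-x^2/2) : ℝ) •
        Complex.exp (Complex.I * ((ω * x : ℝ) : ℂ)))
      = fun x : ℝ => ((K⁻¹ : ℝ) : ℂ) * (((x^2 * Real.exp (-x^2/2) : ℝ) : ℂ)
        * Complex.exp (Complex.I * ((ω*x : ℝ) : ℂ))) := by
    funext x
    rw [Complex.real_smul]
    push_cast
    ring
  rw [hsplit, integral_const_mul, ← hSdef, hS']
  push_cast
  field_simp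

lemma charFun1_withDensity {ρ : ℝ → ℝ} (hρm : Measurable ρ) (hρ0 : ∀ x, 0 ≤ ρ x) (ω : ℝ) :
    charFun1 (volume.withDensity (fun x => ENNReal.ofReal (ρ x))) ω
      = ∫ x : ℝ, (ρ x) • Complex.exp (Complex.I * ((ω * x : ℝ) : ℂ)) := by
  rw [charFun1]
  refine (integral_withDensity_eq_integral_smul hρm.real_toNNReal _).trans ?_
  congr 1
  funext x
  rw [NNReal.smul_def, Real.coe_toNNReal _ (hρ0 x)]

lemma phase1_pos {P : Measure ℝ} {ω : ℝ} {r : ℝ} (h : charFun1 P ω = (r:ℂ)) (hr : 0 < r) :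
    phase1 P ω = 1 := by
  rw [phase1, h, Complex.norm_real, Real.norm_eq_abs, _root_.abs_of_pos hr, div_self]
  exact_mod_cast hr.ne'

lemma phase1_neg {P : Measure ℝ} {ω : ℝ} {r : ℝ} (h : charFun1 P ω = (r:ℂ)) (hr : r < 0) :
    phase1 P ω = -1 := by
  rw [phase1, h, Complex.norm_real, Real.norm_eq_abs, _root_.abs_of_neg hr]
  rw [div_eq_iff]
  · push_cast; ring
  · push_cast
    exact_mod_cast neg_ne_zero.mpr hr.ne

end Aux

/-- The measures with densities `(1/√(2π)) x² exp(−x²/2)` and `(1/2)|x| exp(−|x|)` are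
distinct, yet for every `ω` with `|ω| ≠ 1` their characteristic functions do not vanish
and their phase functions coincide (both equal `+1` for `|ω| < 1` and `−1` for `|ω| > 1`). -/
theorem stmt_18 (P Q : Measure ℝ)
    (hP : P = volume.withDensity
      (fun x => ENNReal.ofReal ((Real.sqrt (2 * π))⁻¹ * x ^ 2 * Real.exp (-x ^ 2 / 2))))
    (hQ : Q = volume.withDensity
      (fun x => ENNReal.ofReal ((1 / 2) * |x| * Real.exp (-|x|)))) :
    P ≠ Q ∧
    ∀ ω : ℝ, |ω| ≠ 1 →
      charFun1 P ω ≠ 0 ∧ charFun1 Q ω ≠ 0 ∧ phase1 P ω = phase1 Q ω ∧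
      (|ω| < 1 → phase1 P ω = 1 ∧ phase1 Q ω = 1) ∧
      (1 < |ω| → phase1 P ω = -1 ∧ phase1 Q ω = -1) := by
  subst hP hQ
  have hmP : Measurable (fun x : ℝ =>
      (Real.sqrt (2 * π))⁻¹ * x ^ 2 * Real.exp (-x ^ 2 / 2)) :=
    (by continuity : Continuous fun x : ℝ =>
      (Real.sqrt (2 * π))⁻¹ * x ^ 2 * Real.exp (-x ^ 2 / 2)).measurable
  have hmQ : Measurable (fun x : ℝ => (1 / 2) * |x| * Real.exp (-|x|)) :=
    (by continuity : Continuous fun x : ℝ => (1 / 2) * |x| * Real.exp (-|x|)).measurable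
  have hcharP : ∀ ω : ℝ, charFun1 (volume.withDensity
      (fun x => ENNReal.ofReal ((Real.sqrt (2 * π))⁻¹ * x ^ 2 * Real.exp (-x ^ 2 / 2)))) ω
      = (((1 - ω^2) * Real.exp (-ω^2/2) : ℝ) : ℂ) := by
    intro ω
    rw [charFun1_withDensity hmP (fun x => by positivity) ω]
    exact LP ω
  have hcharQ : ∀ ω : ℝ, charFun1 (volume.withDensity
      (fun x => ENNReal.ofReal ((1 / 2) * |x| * Real.exp (-|x|)))) ω
      = (((1 - ω^2)/(1+ω^2)^2 : ℝ) : ℂ) := by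
    intro ω
    rw [charFun1_withDensity hmQ (fun x => by positivity) ω]
    exact LQ ω
  constructor
  · intro hPQ
    have h2 : (((1-(2:ℝ)^2) * Real.exp (-(2:ℝ)^2/2) : ℝ) : ℂ)
        = (((1-(2:ℝ)^2)/(1+(2:ℝ)^2)^2 : ℝ) : ℂ) := by
      rw [← hcharP 2, ← hcharQ 2, hPQ]
    have h3 : (1-(2:ℝ)^2) * Real.exp (-(2:ℝ)^2/2) = (1-(2:ℝ)^2)/(1+(2:ℝ)^2)^2 := by
      exact_mod_cast h2
    have h4 : Real.exp (-(2:ℝ)) = 1/25 := by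
      norm_num at h3
      linarith
    have h5 : Real.exp (2:ℝ) = 25 := by
      rw [Real.exp_neg] at h4
      field_simp at h4
      linarith [h4]
    have h6 : Real.exp (2:ℝ) < 25 := by
      have he : Real.exp 1 < 2.7182818286 := Real.exp_one_lt_d9
      have h7 : Real.exp 2 = Real.exp 1 * Real.exp 1 := by
        rw [← Real.exp_add]; norm_num
      nlinarith [Real.exp_pos 1]
    linarith
  · intro ω hω
    rcases hω.lt_or_gt with h1 | h1
    · have hω2 : ω^2 < 1 := by nlinarith [sq_abs ω, abs_nonneg ω]
      have hrP : 0 < (1-ω^2) * Real.exp (-ω^2/2) :=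
        mul_pos (by linarith) (Real.exp_pos _)
      have hrQ : 0 < (1-ω^2)/(1+ω^2)^2 := div_pos (by linarith) (by positivity)
      have hpP := phase1_pos (hcharP ω) hrP
      have hpQ := phase1_pos (hcharQ ω) hrQ
      refine ⟨?_, ?_, by rw [hpP, hpQ], fun _ => ⟨hpP, hpQ⟩,
        fun hc => absurd (h1.trans hc) (lt_irrefl _)⟩
      · rw [hcharP ω]
        exact Complex.ofReal_ne_zero.mpr hrP.ne'
      · rw [hcharQ ω]
        exact Complex.ofReal_ne_zero.mpr hrQ.ne'
    · have hω2 : 1 < ω^2 := by nlinarith [sq_abs ω, abs_nonneg ω]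
      have hrP : (1-ω^2) * Real.exp (-ω^2/2) < 0 :=
        mul_neg_of_neg_of_pos (by linarith) (Real.exp_pos _)
      have hrQ : (1-ω^2)/(1+ω^2)^2 < 0 := div_neg_of_neg_of_pos (by linarith) (by positivity)
      have hpP := phase1_neg (hcharP ω) hrP
      have hpQ := phase1_neg (hcharQ ω) hrQ
      refine ⟨?_, ?_, by rw [hpP, hpQ], fun hc => absurd (hc.trans h1) (lt_irrefl _),
        fun _ => ⟨hpP, hpQ⟩⟩
      · rw [hcharP ω]
        exact Complex.ofReal_ne_zero.mpr hrP.ne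
      · rw [hcharQ ω]
        exact Complex.ofReal_ne_zero.mpr hrQ.ne
end
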